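/- For A ∈ ℂ^{m×n} and Hermitian B ∈ ℂ^{m×m}, the equation AXA* = B has a positive semidefinite solution X if and only if B is positive semidefinite and the column space of B is contained in the column space of A. When this holds, X = A†B(A†)* + (I − A†A)UU*(I − A†A) is such a solution for every U ∈ ℂ^{n×n}. -/

import Mathlib

open Matrix
open scoped ComplexOrder

def IsMoorePenrose {m n : Type*} [Fintype m] [Fintype n]
    (A : Matrix m n ℂ) (X : Matrix n m ℂ) : Prop :=
  A * X * A = A ∧ X * A * X = X ∧ (A * X)ᴴ = A * X ∧ (X * A)ᴴ = X * A

open Classical in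
noncomputable def pinv {m n : Type*} [Fintype m] [Fintype n]
    (A : Matrix m n ℂ) : Matrix n m ℂ :=
  if h : ∃ X, IsMoorePenrose A X then h.choose else 0

/-!
For a Hermitian `H`, the functional calculus applied to `x ↦ x⁻¹` (with `0⁻¹ = 0`) gives a
Hermitian Moore–Penrose inverse `P` of `H`; then `P Aᴴ` is a Moore–Penrose inverse of `A`, taking
`H = Aᴴ A`. Given a Moore–Penrose inverse `X` of `A`, the range condition says `A X B = B`, so
`X B Xᴴ` solves `A Y Aᴴ = B`, and adding a congruence of `U Uᴴ` by the projection `1 - X A`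
(which `A` annihilates) keeps it a positive semidefinite solution. Conversely `A Y Aᴴ` is positive
semidefinite for `Y ⪰ 0` and its range lies in that of `A`.
-/

variable {m n : Type*} [Fintype m] [Fintype n]

lemma Matrix.IsHermitian.isMoorePenrose_cfc_inv [DecidableEq n] {H : Matrix n n ℂ}
    (hH : H.IsHermitian) : IsMoorePenrose H (cfc (·⁻¹ : ℝ → ℝ) H) := by
  have hsa : IsSelfAdjoint H := hH
  set P := cfc (·⁻¹ : ℝ → ℝ) H
  have hcont : ContinuousOn (·⁻¹ : ℝ → ℝ) (spectrum ℝ H) :=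
    H.finite_real_spectrum.continuousOn _
  have hHP : H * P = P * H := by
    simpa only [cfc_id' ℝ H] using (cfc_commute_cfc (fun x : ℝ => x) (·⁻¹) H).eq
  have hP : Pᴴ = P := (cfc_predicate _ H : IsSelfAdjoint P)
  refine ⟨?_, ?_, ?_, ?_⟩
  · have h := cfc_mul (fun x : ℝ => x * x⁻¹) (fun x => x) H
    rw [cfc_mul (fun x : ℝ => x) (·⁻¹) H, cfc_id' ℝ H] at h
    simpa only [mul_inv_mul_cancel, cfc_id' ℝ H] using h.symm
  · have h := cfc_mul (fun x : ℝ => x⁻¹ * x) (·⁻¹) H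
    rw [cfc_mul (·⁻¹) (fun x : ℝ => x) H, cfc_id' ℝ H] at h
    have hinv : ∀ x : ℝ, x⁻¹ * x * x⁻¹ = x⁻¹ := fun x => by simpa using mul_inv_mul_cancel x⁻¹
    simpa only [hinv] using h.symm
  · rw [conjTranspose_mul, hP, hH.eq, hHP]
  · rw [conjTranspose_mul, hP, hH.eq, hHP]

lemma IsMoorePenrose.mul_conjTranspose [DecidableEq n] {A : Matrix m n ℂ} {P : Matrix n n ℂ}
    (hP : IsMoorePenrose (Aᴴ * A) P) (hPh : Pᴴ = P) : IsMoorePenrose A (P * Aᴴ) := by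
  obtain ⟨hHPH, hPHP, -, hPH⟩ := hP
  refine ⟨?_, ?_, ?_, ?_⟩
  · have h : (Aᴴ * A) * (P * (Aᴴ * A) - 1) = 0 := by
      rw [Matrix.mul_sub, Matrix.mul_one, ← Matrix.mul_assoc, hHPH, sub_self]
    -- `Aᴴ A` and `A` have the same kernel
    rw [conjTranspose_mul_self_mul_eq_zero, Matrix.mul_sub, Matrix.mul_one, sub_eq_zero] at h
    simpa only [Matrix.mul_assoc] using h
  · rw [Matrix.mul_assoc P Aᴴ A, ← Matrix.mul_assoc, hPHP]
  · rw [conjTranspose_mul, conjTranspose_mul, hPh, conjTranspose_conjTranspose,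
      Matrix.mul_assoc]
  · rwa [Matrix.mul_assoc]

lemma exists_isMoorePenrose [DecidableEq n] (A : Matrix m n ℂ) : ∃ X, IsMoorePenrose A X :=
  have hP := (isHermitian_conjTranspose_mul_self A).isMoorePenrose_cfc_inv
  ⟨_, hP.mul_conjTranspose (cfc_predicate _ (Aᴴ * A) : IsSelfAdjoint _)⟩

lemma isMoorePenrose_pinv [DecidableEq n] (A : Matrix m n ℂ) : IsMoorePenrose A (pinv A) := by
  have hex := exists_isMoorePenrose A
  rw [pinv, dif_pos hex]
  exact hex.choose_spec

namespace IsMoorePenrose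

variable {A : Matrix m n ℂ} {X : Matrix n m ℂ}

lemma mul_one_sub_mul_eq_zero [DecidableEq n] (hX : IsMoorePenrose A X) :
    A * (1 - X * A) = 0 := by
  rw [Matrix.mul_sub, Matrix.mul_one, ← Matrix.mul_assoc, hX.1, sub_self]

lemma conjTranspose_one_sub_mul [DecidableEq n] (hX : IsMoorePenrose A X) :
    (1 - X * A)ᴴ = 1 - X * A := by
  rw [conjTranspose_sub, conjTranspose_one, hX.2.2.2]

lemma mul_mul_eq_of_range_le {p : Type*} [Fintype p] {B : Matrix m p ℂ}
    (hX : IsMoorePenrose A X) (hBA : LinearMap.range B.mulVecLin ≤ LinearMap.range A.mulVecLin) :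
    A * X * B = B := by
  refine ext_iff_mulVec.mpr fun v => ?_
  obtain ⟨w, hw⟩ := hBA ⟨v, rfl⟩
  simp only [mulVecLin_apply] at hw
  rw [← mulVec_mulVec, ← hw, mulVec_mulVec, hX.1]

lemma posSemidef_add_mul_mul [DecidableEq n] (hX : IsMoorePenrose A X) {B : Matrix m m ℂ}
    (hB : B.PosSemidef) (U : Matrix n n ℂ) :
    (X * B * Xᴴ + (1 - X * A) * (U * Uᴴ) * (1 - X * A)).PosSemidef := by
  refine (hB.mul_mul_conjTranspose_same X).add ?_
  have h := (posSemidef_self_mul_conjTranspose U).mul_mul_conjTranspose_same (1 - X * A)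
  rwa [hX.conjTranspose_one_sub_mul] at h

lemma mul_add_mul_mul_conjTranspose [DecidableEq n] (hX : IsMoorePenrose A X)
    {B : Matrix m m ℂ} (hB : B.IsHermitian)
    (hBA : LinearMap.range B.mulVecLin ≤ LinearMap.range A.mulVecLin) (U : Matrix n n ℂ) :
    A * (X * B * Xᴴ + (1 - X * A) * (U * Uᴴ) * (1 - X * A)) * Aᴴ = B := by
  have hAXB : A * X * B = B := hX.mul_mul_eq_of_range_le hBA
  have hBXA : B * (A * X)ᴴ = B := by
    rw [← hB.eq, ← conjTranspose_mul, hAXB]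
  calc A * (X * B * Xᴴ + (1 - X * A) * (U * Uᴴ) * (1 - X * A)) * Aᴴ
      = A * X * B * (A * X)ᴴ + A * (1 - X * A) * (U * Uᴴ) * (1 - X * A) * Aᴴ := by
        simp only [Matrix.mul_add, Matrix.add_mul, conjTranspose_mul, Matrix.mul_assoc]
    _ = B := by rw [hX.mul_one_sub_mul_eq_zero, hAXB, hBXA]; simp

end IsMoorePenrose

lemma range_mul_mul_conjTranspose_le (A : Matrix m n ℂ) (Y : Matrix n n ℂ) :
    LinearMap.range (A * Y * Aᴴ).mulVecLin ≤ LinearMap.range A.mulVecLin := by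
  rw [Matrix.mul_assoc, mulVecLin_mul]
  exact LinearMap.range_comp_le_range _ _

theorem psd_solution_AXAstar_eq_B_general {m n : ℕ} (A : Matrix (Fin m) (Fin n) ℂ)
    (B : Matrix (Fin m) (Fin m) ℂ) :
    ((∃ X : Matrix (Fin n) (Fin n) ℂ, X.PosSemidef ∧ A * X * Aᴴ = B) ↔
      (B.PosSemidef ∧ LinearMap.range B.mulVecLin ≤ LinearMap.range A.mulVecLin)) ∧
    ((B.PosSemidef ∧ LinearMap.range B.mulVecLin ≤ LinearMap.range A.mulVecLin) →
      ∀ U : Matrix (Fin n) (Fin n) ℂ,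
        (pinv A * B * (pinv A)ᴴ + (1 - pinv A * A) * (U * Uᴴ) * (1 - pinv A * A)).PosSemidef ∧
        A * (pinv A * B * (pinv A)ᴴ + (1 - pinv A * A) * (U * Uᴴ) * (1 - pinv A * A)) * Aᴴ = B) := by
  have hX := isMoorePenrose_pinv A
  refine ⟨⟨?_, fun ⟨hB, hBA⟩ => ⟨_, hX.posSemidef_add_mul_mul hB 0,
      hX.mul_add_mul_mul_conjTranspose hB.isHermitian hBA 0⟩⟩,
    fun ⟨hB, hBA⟩ U => ⟨hX.posSemidef_add_mul_mul hB U,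
      hX.mul_add_mul_mul_conjTranspose hB.isHermitian hBA U⟩⟩
  rintro ⟨Y, hY, rfl⟩
  exact ⟨hY.mul_mul_conjTranspose_same A, range_mul_mul_conjTranspose_le A Y⟩

theorem psd_solution_AXAstar_eq_B {m n : ℕ} (A : Matrix (Fin m) (Fin n) ℂ)
    (B : Matrix (Fin m) (Fin m) ℂ) (hB : B.IsHermitian) :
    ((∃ X : Matrix (Fin n) (Fin n) ℂ, X.PosSemidef ∧ A * X * Aᴴ = B) ↔
      (B.PosSemidef ∧ LinearMap.range B.mulVecLin ≤ LinearMap.range A.mulVecLin)) ∧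
    ((B.PosSemidef ∧ LinearMap.range B.mulVecLin ≤ LinearMap.range A.mulVecLin) →
      ∀ U : Matrix (Fin n) (Fin n) ℂ,
        (pinv A * B * (pinv A)ᴴ + (1 - pinv A * A) * (U * Uᴴ) * (1 - pinv A * A)).PosSemidef ∧
        A * (pinv A * B * (pinv A)ᴴ + (1 - pinv A * A) * (U * Uᴴ) * (1 - pinv A * A)) * Aᴴ = B) :=
  psd_solution_AXAstar_eq_B_general A B
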